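/- arXiv:2001.03262 — 2 statements merged into one kernel-verified Lean document; each statement's English description precedes it below -/
import Mathlib

section
/- Let f ∈ ℝ[x₁,…,xₙ] be a polynomial satisfying conditions (C1), (C2) and (C3), and let λ_f be a map of minimal barycentric coordinates of f. If for every vertex at infinity α ∈ V(f) the inequality f_α > Σ_{α*∈D(f), α*∉(2ℕ₀)ⁿ} |f_{α*}|·λ_f(α*,α) − Σ_{α*∈D(f), α*∈(2ℕ₀)ⁿ} min{0, f_{α*}}·λ_f(α*,α) holds, then f is coercive on ℝⁿ. -/
open MvPolynomial Filter

noncomputable section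

open scoped Classical

/-- The embedding of exponent vectors into `ℝⁿ`. -/
def expEmbed {n : ℕ} (α : Fin n →₀ ℕ) : Fin n → ℝ := fun i => (α i : ℝ)

/-- The Newton polytope at infinity `New∞(f) = conv(A(f) ∪ {0})`. -/
def newtonInfty {n : ℕ} (f : MvPolynomial (Fin n) ℝ) : Set (Fin n → ℝ) :=
  convexHull ℝ (expEmbed '' ((insert 0 f.support : Finset (Fin n →₀ ℕ)) : Set (Fin n →₀ ℕ)))

/-- The vertex set `V₀(f)` of the Newton polytope at infinity, as a
finset of exponent vectors. -/
def V0 {n : ℕ} (f : MvPolynomial (Fin n) ℝ) : Finset (Fin n →₀ ℕ) :=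
  (insert 0 f.support).filter fun α => expEmbed α ∈ Set.extremePoints ℝ (newtonInfty f)

/-- The set `V(f) = V₀(f) \ {0}` of vertices at infinity. -/
def Vinf {n : ℕ} (f : MvPolynomial (Fin n) ℝ) : Finset (Fin n →₀ ℕ) := (V0 f).erase 0

/-- An exponent vector with all entries even, i.e. a member of `(2ℕ₀)ⁿ`. -/
def IsEvenExp {n : ℕ} (α : Fin n →₀ ℕ) : Prop := ∀ i, Even (α i)

/-- Condition (C1): `V(f) ⊆ (2ℕ₀)ⁿ`. -/
def CondC1 {n : ℕ} (f : MvPolynomial (Fin n) ℝ) : Prop := ∀ α ∈ Vinf f, IsEvenExp α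

/-- Condition (C2): positive coefficients at all vertices at infinity. -/
def CondC2 {n : ℕ} (f : MvPolynomial (Fin n) ℝ) : Prop := ∀ α ∈ Vinf f, 0 < f.coeff α

/-- Condition (C3): `V(f)` contains a vector `2 kᵢ eᵢ` for every `i`. -/
def CondC3 {n : ℕ} (f : MvPolynomial (Fin n) ℝ) : Prop :=
  ∀ i : Fin n, ∃ k : ℕ, 0 < k ∧ Finsupp.single i (2 * k) ∈ Vinf f

/-- An exponent vector of `f` is gem degenerate if it is no vertex at infinity but lies in
some nonempty face of `New∞(f)` not containing the origin. -/
def IsGemDegenerate {n : ℕ} (f : MvPolynomial (Fin n) ℝ) (α : Fin n →₀ ℕ) : Prop :=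
  α ∈ f.support ∧ α ∉ Vinf f ∧
    ∃ G : Set (Fin n → ℝ), G.Nonempty ∧ IsExtreme ℝ (newtonInfty f) G ∧
      (0 : Fin n → ℝ) ∉ G ∧ expEmbed α ∈ G

/-- The set `D(f)` of gem degenerate exponent vectors of `f`. -/
def Dfin {n : ℕ} (f : MvPolynomial (Fin n) ℝ) : Finset (Fin n →₀ ℕ) :=
  f.support.filter fun α => IsGemDegenerate f α

/-- `f` is gem regular if `D(f) = ∅`. -/
def GemRegular {n : ℕ} (f : MvPolynomial (Fin n) ℝ) : Prop := ∀ α, ¬ IsGemDegenerate f α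

/-- `V₀ᶜ(f) = A(f) \ V₀(f)`. -/
def V0c {n : ℕ} (f : MvPolynomial (Fin n) ℝ) : Finset (Fin n →₀ ℕ) := f.support \ V0 f

/-- A map of minimal barycentric coordinates of `f`. -/
def IsMinBary {n : ℕ} (f : MvPolynomial (Fin n) ℝ)
    (lam : (Fin n →₀ ℕ) → (Fin n →₀ ℕ) → ℝ) : Prop :=
  (∀ αs α, 0 ≤ lam αs α ∧ lam αs α ≤ 1) ∧
  ∀ αs ∈ V0c f, ∃ W : Finset (Fin n →₀ ℕ), W ⊆ V0 f ∧
    AffineIndependent ℝ (fun w : W => expEmbed (w : Fin n →₀ ℕ)) ∧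
    (∀ α ∈ W, 0 < lam αs α) ∧
    (∀ α ∈ V0 f, α ∉ W → lam αs α = 0) ∧
    (∑ α ∈ W, lam αs α) = 1 ∧
    (∑ α ∈ W, lam αs α • expEmbed α) = expEmbed αs

/-- `W_{α*}(λ_f)`, the minimal vertex representation of `α*` corresponding to `λ_f`. -/
def Wfin {n : ℕ} (f : MvPolynomial (Fin n) ℝ)
    (lam : (Fin n →₀ ℕ) → (Fin n →₀ ℕ) → ℝ) (αs : Fin n →₀ ℕ) : Finset (Fin n →₀ ℕ) :=
  (V0 f).filter fun α => 0 < lam αs α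

/-- The circuit number `Θ(f, λ_f, α*)`. -/
def circuitNumber {n : ℕ} (f : MvPolynomial (Fin n) ℝ)
    (lam : (Fin n →₀ ℕ) → (Fin n →₀ ℕ) → ℝ) (αs : Fin n →₀ ℕ) : ℝ :=
  ∏ α ∈ Wfin f lam αs, (f.coeff α / lam αs α) ^ (lam αs α)

/-- `g` is coercive on `ℝⁿ`: `g(x) → +∞` whenever `‖x‖ → +∞`. -/
def Coercive {n : ℕ} (g : (Fin n → ℝ) → ℝ) : Prop :=
  Tendsto g (comap (fun x : Fin n → ℝ => ‖x‖) atTop) atTop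

/-!
Write `|x|^α = ∏ |xᵢ|^{αᵢ}` and `S(x) = ∑_{α ∈ V(f)} |x|^α`; by (C3), `S(x) ≥ ‖x‖²` once
`‖x‖ ≥ 1`. Each term of `f` is compared with `S`. By (C1) a vertex term is `f_α |x|^α`.
A gem degenerate `α*` is the barycentre of its vertices `W_{α*}`, so weighted AM–GM gives
`|x|^{α*} ≤ ∑_α λ(α*,α) |x|^α + λ(α*,0)`. Its term is at least `-w(α*) |x|^{α*}`, with
`w(α*) = |f_{α*}|`, or `-min(0, f_{α*})` for even `α*`, and is paid for by the vertex
coefficients, which the hypothesis keeps positive. Any other exponent lies in no face of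
`New∞(f)` avoiding the origin, so some `t α*` with `t > 1` is still in `New∞(f)`; then
`|x|^{α*} ≤ S(x)^T` with `T < 1`, which is `o(S(x))`. Altogether `f(x) ≥ (c/2) S(x) - C`
for some `c > 0`.
-/

lemma exists_rpow_le_mul_add {T ε : ℝ} (hT0 : 0 ≤ T) (hT1 : T < 1) (hε : 0 < ε) :
    ∃ C : ℝ, ∀ s : ℝ, 0 ≤ s → s ^ T ≤ ε * s + C := by
  obtain ⟨M, hM⟩ := eventually_atTop.1
    ((tendsto_rpow_neg_atTop (sub_pos.2 hT1)).eventually (gt_mem_nhds hε))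
  have hM₁ : (0 : ℝ) < max M 1 := lt_max_of_lt_right one_pos
  refine ⟨max M 1 ^ T, fun s hs => ?_⟩
  have hC : 0 ≤ max M 1 ^ T := Real.rpow_nonneg hM₁.le T
  rcases le_or_gt s (max M 1) with hsM | hsM
  · have := Real.rpow_le_rpow hs hsM hT0
    nlinarith
  · have hs₀ : 0 < s := hM₁.trans hsM
    have hsT : s ^ T = s ^ (-(1 - T)) * s := by
      rw [← Real.rpow_add_one hs₀.ne']
      ring_nf
    have := hM s ((le_max_left M 1).trans hsM.le)
    nlinarith

lemma exists_sum_mul_le_mul_add {X ι : Type*} {S : X → ℝ} (hS : ∀ x, 0 ≤ S x)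
    {s : Finset ι} {a : ι → ℝ} (ha : ∀ i ∈ s, 0 ≤ a i) {g : ι → X → ℝ}
    (hg : ∀ i ∈ s, ∀ ε > 0, ∃ C, ∀ x, g i x ≤ ε * S x + C) {ε : ℝ} (hε : 0 < ε) :
    ∃ C, ∀ x, ∑ i ∈ s, a i * g i x ≤ ε * S x + C := by
  set A := ∑ i ∈ s, a i
  have hA : 0 ≤ A := Finset.sum_nonneg ha
  have hε' : 0 < ε / (A + 1) := by positivity
  choose! C hC using fun i hi => hg i hi _ hε'
  refine ⟨∑ i ∈ s, a i * C i, fun x => ?_⟩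
  have hAε : A * (ε / (A + 1)) ≤ ε := by
    rw [mul_div_assoc', div_le_iff₀ (by positivity)]
    nlinarith
  calc ∑ i ∈ s, a i * g i x
      ≤ ∑ i ∈ s, a i * (ε / (A + 1) * S x + C i) :=
        Finset.sum_le_sum fun i hi => mul_le_mul_of_nonneg_left (hC i hi x) (ha i hi)
    _ = A * (ε / (A + 1)) * S x + ∑ i ∈ s, a i * C i := by
        simp only [mul_add, Finset.sum_add_distrib, A, Finset.sum_mul]
        congr 1
        exact Finset.sum_congr rfl fun i _ => by ring
    _ ≤ ε * S x + ∑ i ∈ s, a i * C i := by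
        gcongr
        exact hS x

lemma exists_pos_le_of_forall_pos {ι : Type*} (s : Finset ι) {g : ι → ℝ}
    (hg : ∀ i ∈ s, 0 < g i) : ∃ c > 0, ∀ i ∈ s, c ≤ g i := by
  rcases s.eq_empty_or_nonempty with rfl | hs
  · exact ⟨1, one_pos, by simp⟩
  · obtain ⟨i₀, hi₀, hmin⟩ := s.exists_min_image g hs
    exact ⟨g i₀, hg i₀ hi₀, hmin⟩

section Faces

variable {E : Type*} [AddCommGroup E] [Module ℝ E] {P : Set E}

lemma Convex.isExtreme_setOf_mem_openSegment (hP : Convex ℝ P) (p : E) :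
    IsExtreme ℝ P {y | y ∈ P ∧ ∃ z ∈ P, p ∈ openSegment ℝ y z} := by
  refine ⟨fun y hy => hy.1, ?_⟩
  rintro x₁ h₁ x₂ h₂ w ⟨-, z, hz, c₁, c₂, hc₁, hc₂, hc, rfl⟩ ⟨a₁, a₂, ha₁, ha₂, ha, rfl⟩
  -- `c₁ (a₁ x₁ + a₂ x₂) + c₂ z = (c₁ a₁) x₁ + d ((c₁ a₂ / d) x₂ + (c₂ / d) z)`
  set d := c₁ * a₂ + c₂ with hd
  have hd₀ : 0 < d := by positivity
  refine ⟨h₁, (c₁ * a₂ / d) • x₂ + (c₂ / d) • z,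
    hP h₂ hz (by positivity) (by positivity) (by field_simp; exact hd.symm), c₁ * a₁, d,
    by positivity, hd₀, by linear_combination c₁ * ha + hc, ?_⟩
  match_scalars <;> field_simp

lemma Convex.exists_one_lt_smul_mem (hP : Convex ℝ P) {p : E} (hp : p ∈ P)
    (H : ∀ G : Set E, G.Nonempty → IsExtreme ℝ P G → (0 : E) ∉ G → p ∉ G) :
    ∃ t : ℝ, 1 < t ∧ t • p ∈ P := by
  by_contra! hcon
  have hpG : p ∈ {y | y ∈ P ∧ ∃ z ∈ P, p ∈ openSegment ℝ y z} := ⟨hp, p, hp, by simp⟩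
  refine H _ ⟨p, hpG⟩ (hP.isExtreme_setOf_mem_openSegment p) ?_ hpG
  rintro ⟨-, z, hz, a, b, ha, hb, hab, hpz⟩
  rw [smul_zero, zero_add] at hpz
  refine hcon b⁻¹ (one_lt_inv₀ hb |>.2 (by linarith)) ?_
  rwa [← hpz, smul_smul, inv_mul_cancel₀ hb.ne', one_smul]

end Faces

variable {n : ℕ}

lemma expEmbed_injective : Function.Injective (expEmbed (n := n)) := fun α β h =>
  Finsupp.ext fun i => by simpa [expEmbed] using congrFun h i

@[simp]
lemma expEmbed_zero : expEmbed (0 : Fin n →₀ ℕ) = 0 := by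
  funext i
  simp [expEmbed]

lemma Vinf_subset_support (f : MvPolynomial (Fin n) ℝ) : Vinf f ⊆ f.support := by
  intro α hα
  obtain ⟨hα₀, hαV⟩ := Finset.mem_erase.1 hα
  exact (Finset.mem_insert.1 (Finset.mem_filter.1 hαV).1).resolve_left hα₀

lemma V0_subset_insert_zero_Vinf (f : MvPolynomial (Fin n) ℝ) : V0 f ⊆ insert 0 (Vinf f) :=
  Finset.insert_erase_subset 0 (V0 f)

lemma Dfin_subset_V0c (f : MvPolynomial (Fin n) ℝ) : Dfin f ⊆ V0c f := by
  intro α hα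
  obtain ⟨hsupp, hnV, G, -, -, hG₀, hαG⟩ := (Finset.mem_filter.1 hα).2
  have hα₀ : α ≠ 0 := by
    rintro rfl
    exact hG₀ (by simpa using hαG)
  exact Finset.mem_sdiff.2 ⟨hsupp, fun hV0 => hnV (Finset.mem_erase.2 ⟨hα₀, hV0⟩)⟩

lemma newtonInfty_eq_convexHull_V0 (f : MvPolynomial (Fin n) ℝ) :
    newtonInfty f = convexHull ℝ (expEmbed '' (V0 f : Set (Fin n →₀ ℕ))) := by
  set A := expEmbed '' ((insert 0 f.support : Finset (Fin n →₀ ℕ)) : Set (Fin n →₀ ℕ))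
  have hA : A.Finite := (Finset.finite_toSet _).image _
  have hext : (newtonInfty f).extremePoints ℝ = expEmbed '' (V0 f : Set (Fin n →₀ ℕ)) := by
    refine Set.Subset.antisymm (fun y hy => ?_) ?_
    · obtain ⟨α, hα, rfl⟩ := extremePoints_convexHull_subset hy
      exact ⟨α, Finset.mem_filter.2 ⟨hα, hy⟩, rfl⟩
    · rintro y ⟨α, hα, rfl⟩
      exact (Finset.mem_filter.1 hα).2
  calc newtonInfty f = closure (convexHull ℝ ((newtonInfty f).extremePoints ℝ)) :=
        (closure_convexHull_extremePoints (hA.isCompact_convexHull ℝ) (convex_convexHull ℝ A)).symm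
    _ = _ := by rw [hext, (((V0 f).finite_toSet.image _).isClosed_convexHull ℝ).closure_eq]

lemma exists_sum_smul_eq_expEmbed_of_not_isGemDegenerate (f : MvPolynomial (Fin n) ℝ)
    {β : Fin n →₀ ℕ} (hβ : β ∈ f.support) (hβV : β ∉ Vinf f) (hβD : ¬ IsGemDegenerate f β) :
    ∃ μ : (Fin n →₀ ℕ) → ℝ, (∀ α ∈ Vinf f, 0 ≤ μ α) ∧ ∑ α ∈ Vinf f, μ α < 1 ∧
      ∑ α ∈ Vinf f, μ α • expEmbed α = expEmbed β := by
  have hβP : expEmbed β ∈ newtonInfty f :=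
    subset_convexHull ℝ _ ⟨β, Finset.mem_insert_of_mem hβ, rfl⟩
  obtain ⟨t, ht, htP⟩ :=
    Convex.exists_one_lt_smul_mem (P := newtonInfty f) (convex_convexHull ℝ _) hβP
    fun G hG hGP hG₀ hβG => hβD ⟨hβ, hβV, G, hG, hGP, hG₀, hβG⟩
  rw [newtonInfty_eq_convexHull_V0, ← Finset.coe_image] at htP
  obtain ⟨w, hw₀, hw₁, hwβ⟩ := Finset.mem_convexHull'.1 htP
  rw [Finset.sum_image expEmbed_injective.injOn] at hw₁ hwβ
  have ht₀ : 0 < t := one_pos.trans ht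
  have hw₀' : ∀ α ∈ V0 f, 0 ≤ w (expEmbed α) := fun α hα => hw₀ _ (Finset.mem_image_of_mem _ hα)
  refine ⟨fun α => t⁻¹ * w (expEmbed α), fun α hα => ?_, ?_, ?_⟩
  · exact mul_nonneg (by positivity) (hw₀' α (Finset.mem_of_mem_erase hα))
  · calc ∑ α ∈ Vinf f, t⁻¹ * w (expEmbed α) = t⁻¹ * ∑ α ∈ Vinf f, w (expEmbed α) := by
          rw [Finset.mul_sum]
      _ ≤ t⁻¹ * 1 := by
          gcongr
          rw [← hw₁]
          exact Finset.sum_le_sum_of_subset_of_nonneg (Finset.erase_subset _ _)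
            fun α hα _ => hw₀' α hα
      _ < 1 := by rw [mul_one]; exact inv_lt_one_of_one_lt₀ ht
  · have hVinf : ∑ α ∈ Vinf f, w (expEmbed α) • expEmbed α = t • expEmbed β := by
      rw [← hwβ]
      exact Finset.sum_erase _ (by simp)
    simp_rw [← smul_smul, ← Finset.smul_sum, hVinf, smul_smul, inv_mul_cancel₀ ht₀.ne',
      one_smul]

def absMonomial (x : Fin n → ℝ) (α : Fin n →₀ ℕ) : ℝ := ∏ i, |x i| ^ α i

lemma absMonomial_nonneg (x : Fin n → ℝ) (α : Fin n →₀ ℕ) : 0 ≤ absMonomial x α :=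
  Finset.prod_nonneg fun _ _ => pow_nonneg (abs_nonneg _) _

@[simp]
lemma absMonomial_zero (x : Fin n → ℝ) : absMonomial x 0 = 1 := by
  simp [absMonomial]

lemma abs_prod_pow_eq_absMonomial (x : Fin n → ℝ) (α : Fin n →₀ ℕ) :
    |∏ i, x i ^ α i| = absMonomial x α := by
  simp [absMonomial, Finset.abs_prod]

lemma prod_pow_eq_absMonomial_of_isEvenExp (x : Fin n → ℝ) {α : Fin n →₀ ℕ}
    (hα : IsEvenExp α) : ∏ i, x i ^ α i = absMonomial x α :=
  Finset.prod_congr rfl fun i _ => ((hα i).pow_abs (x i)).symm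

lemma absMonomial_eq_prod_rpow (x : Fin n → ℝ) {s : Finset (Fin n →₀ ℕ)}
    {w : (Fin n →₀ ℕ) → ℝ} (hw : ∀ α ∈ s, 0 ≤ w α) {β : Fin n →₀ ℕ}
    (hβ : ∑ α ∈ s, w α • expEmbed α = expEmbed β) :
    absMonomial x β = ∏ α ∈ s, absMonomial x α ^ w α := by
  have hβi (i : Fin n) : (β i : ℝ) = ∑ α ∈ s, w α * α i := by
    simpa [expEmbed] using (congrFun hβ i).symm
  calc absMonomial x β = ∏ i, ∏ α ∈ s, |x i| ^ (w α * α i) := by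
        refine Finset.prod_congr rfl fun i _ => ?_
        rw [← Real.rpow_natCast, hβi,
          Real.rpow_sum_of_nonneg (abs_nonneg _) fun α hα => by have := hw α hα; positivity]
    _ = ∏ α ∈ s, ∏ i, (|x i| ^ α i) ^ w α := by
        rw [Finset.prod_comm]
        refine Finset.prod_congr rfl fun α _ => Finset.prod_congr rfl fun i _ => ?_
        rw [← Real.rpow_natCast, ← Real.rpow_mul (abs_nonneg _), mul_comm]
    _ = ∏ α ∈ s, absMonomial x α ^ w α := by
        refine Finset.prod_congr rfl fun α _ => ?_
        rw [absMonomial, Real.finsetProd_rpow _ _ fun i _ => pow_nonneg (abs_nonneg _) _]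

lemma absMonomial_le_sum_mul (x : Fin n → ℝ) {s : Finset (Fin n →₀ ℕ)}
    {w : (Fin n →₀ ℕ) → ℝ} (hw : ∀ α ∈ s, 0 ≤ w α) (hw₁ : ∑ α ∈ s, w α = 1)
    {β : Fin n →₀ ℕ} (hβ : ∑ α ∈ s, w α • expEmbed α = expEmbed β) :
    absMonomial x β ≤ ∑ α ∈ s, w α * absMonomial x α := by
  rw [absMonomial_eq_prod_rpow x hw hβ]
  exact Real.geom_mean_le_arith_mean_weighted s w _ hw hw₁ fun α _ => absMonomial_nonneg x α

def vertexSum (f : MvPolynomial (Fin n) ℝ) (x : Fin n → ℝ) : ℝ :=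
  ∑ α ∈ Vinf f, absMonomial x α

lemma vertexSum_nonneg (f : MvPolynomial (Fin n) ℝ) (x : Fin n → ℝ) : 0 ≤ vertexSum f x :=
  Finset.sum_nonneg fun α _ => absMonomial_nonneg x α

lemma absMonomial_le_vertexSum (f : MvPolynomial (Fin n) ℝ) (x : Fin n → ℝ) {α : Fin n →₀ ℕ}
    (hα : α ∈ Vinf f) : absMonomial x α ≤ vertexSum f x :=
  Finset.single_le_sum (fun β _ => absMonomial_nonneg x β) hα

lemma absMonomial_le_vertexSum_rpow (f : MvPolynomial (Fin n) ℝ) (x : Fin n → ℝ)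
    {μ : (Fin n →₀ ℕ) → ℝ} (hμ : ∀ α ∈ Vinf f, 0 ≤ μ α) {β : Fin n →₀ ℕ}
    (hβ : ∑ α ∈ Vinf f, μ α • expEmbed α = expEmbed β) :
    absMonomial x β ≤ vertexSum f x ^ ∑ α ∈ Vinf f, μ α := by
  rw [absMonomial_eq_prod_rpow x hμ hβ, Real.rpow_sum_of_nonneg (vertexSum_nonneg f x) hμ]
  exact Finset.prod_le_prod (fun α _ => Real.rpow_nonneg (absMonomial_nonneg x α) _)
    fun α hα => Real.rpow_le_rpow (absMonomial_nonneg x α) (absMonomial_le_vertexSum f x hα)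
      (hμ α hα)

lemma absMonomial_le_of_isMinBary {f : MvPolynomial (Fin n) ℝ}
    {lam : (Fin n →₀ ℕ) → (Fin n →₀ ℕ) → ℝ} (hlam : IsMinBary f lam) {β : Fin n →₀ ℕ}
    (hβ : β ∈ V0c f) (x : Fin n → ℝ) :
    absMonomial x β ≤ ∑ α ∈ Vinf f, lam β α * absMonomial x α + lam β 0 := by
  obtain ⟨W, hWV, -, hpos, -, hsum, hvec⟩ := hlam.2 β hβ
  have h0V : (0 : Fin n →₀ ℕ) ∉ Vinf f := Finset.notMem_erase 0 _
  calc absMonomial x β ≤ ∑ α ∈ W, lam β α * absMonomial x α :=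
        absMonomial_le_sum_mul x (fun α hα => (hpos α hα).le) hsum hvec
    _ ≤ ∑ α ∈ insert 0 (Vinf f), lam β α * absMonomial x α :=
        Finset.sum_le_sum_of_subset_of_nonneg (hWV.trans (V0_subset_insert_zero_Vinf f))
          fun α _ _ => mul_nonneg (hlam.1 β α).1 (absMonomial_nonneg x α)
    _ = _ := by rw [Finset.sum_insert h0V, absMonomial_zero, mul_one, add_comm]

lemma exists_absMonomial_le_mul_vertexSum_add {f : MvPolynomial (Fin n) ℝ} {β : Fin n →₀ ℕ}
    (hβ : β ∈ f.support) (hβV : β ∉ Vinf f) (hβD : ¬ IsGemDegenerate f β)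
    {ε : ℝ} (hε : 0 < ε) : ∃ C, ∀ x, absMonomial x β ≤ ε * vertexSum f x + C := by
  obtain ⟨μ, hμ, hμ₁, hμβ⟩ := exists_sum_smul_eq_expEmbed_of_not_isGemDegenerate f hβ hβV hβD
  obtain ⟨C, hC⟩ := exists_rpow_le_mul_add (Finset.sum_nonneg hμ) hμ₁ hε
  exact ⟨C, fun x => (absMonomial_le_vertexSum_rpow f x hμ hμβ).trans
    (hC _ (vertexSum_nonneg f x))⟩

lemma sq_norm_le_vertexSum {f : MvPolynomial (Fin n) ℝ} (hC3 : CondC3 f) {x : Fin n → ℝ}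
    (hx : 1 ≤ ‖x‖) : ‖x‖ ^ 2 ≤ vertexSum f x := by
  obtain ⟨i, hi⟩ : ∃ i, ‖x‖ ≤ |x i| := by
    by_contra! h
    exact lt_irrefl _ ((pi_norm_lt_iff (one_pos.trans_le hx)).2 h)
  obtain ⟨k, hk, hkV⟩ := hC3 i
  have hm : absMonomial x (Finsupp.single i (2 * k)) = |x i| ^ (2 * k) := by
    rw [absMonomial, Finset.prod_eq_single i (fun j _ hj => by simp [hj]) (by simp)]
    simp
  calc ‖x‖ ^ 2 ≤ |x i| ^ 2 := pow_le_pow_left₀ (norm_nonneg x) hi 2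
    _ ≤ |x i| ^ (2 * k) := pow_le_pow_right₀ (hx.trans hi) (by omega)
    _ ≤ vertexSum f x := hm ▸ absMonomial_le_vertexSum f x hkV

lemma tendsto_vertexSum {f : MvPolynomial (Fin n) ℝ} (hC3 : CondC3 f) :
    Tendsto (vertexSum f) (comap (fun x : Fin n → ℝ => ‖x‖) atTop) atTop := by
  refine tendsto_atTop_mono' _ ?_ ((tendsto_pow_atTop two_ne_zero).comp tendsto_comap)
  exact (eventually_ge_atTop 1).comap _ |>.mono fun x hx => sq_norm_le_vertexSum hC3 hx

def gemWeight (f : MvPolynomial (Fin n) ℝ) (α : Fin n →₀ ℕ) : ℝ :=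
  if IsEvenExp α then -min 0 (f.coeff α) else |f.coeff α|

lemma gemWeight_nonneg (f : MvPolynomial (Fin n) ℝ) (α : Fin n →₀ ℕ) : 0 ≤ gemWeight f α := by
  unfold gemWeight
  split_ifs
  · simp
  · exact abs_nonneg _

lemma neg_gemWeight_mul_le (f : MvPolynomial (Fin n) ℝ) (α : Fin n →₀ ℕ) (x : Fin n → ℝ) :
    -(gemWeight f α * absMonomial x α) ≤ f.coeff α * ∏ i, x i ^ α i := by
  have hm := absMonomial_nonneg x α
  unfold gemWeight
  split_ifs with hα
  · rw [prod_pow_eq_absMonomial_of_isEvenExp x hα, neg_mul, neg_neg]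
    exact mul_le_mul_of_nonneg_right (min_le_right _ _) hm
  · rw [← abs_prod_pow_eq_absMonomial, ← abs_mul]
    exact neg_abs_le _

lemma sum_gemWeight_mul_eq (f : MvPolynomial (Fin n) ℝ)
    (lam : (Fin n →₀ ℕ) → (Fin n →₀ ℕ) → ℝ) (α : Fin n →₀ ℕ) :
    ∑ αs ∈ Dfin f, gemWeight f αs * lam αs α =
      (∑ αs ∈ (Dfin f).filter fun αs => ¬ IsEvenExp αs, |f.coeff αs| * lam αs α)
        - ∑ αs ∈ (Dfin f).filter fun αs => IsEvenExp αs, min 0 (f.coeff αs) * lam αs α := by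
  simp only [gemWeight, ite_mul, Finset.sum_ite, neg_mul, Finset.sum_neg_distrib]
  ring

lemma neg_le_sum_Dfin_terms {f : MvPolynomial (Fin n) ℝ}
    {lam : (Fin n →₀ ℕ) → (Fin n →₀ ℕ) → ℝ} (hlam : IsMinBary f lam) (x : Fin n → ℝ) :
    -(∑ α ∈ Vinf f, (∑ αs ∈ Dfin f, gemWeight f αs * lam αs α) * absMonomial x α
        + ∑ αs ∈ Dfin f, gemWeight f αs * lam αs 0)
      ≤ ∑ αs ∈ Dfin f, f.coeff αs * ∏ i, x i ^ αs i := by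
  calc _ = ∑ αs ∈ Dfin f,
        -(gemWeight f αs * (∑ α ∈ Vinf f, lam αs α * absMonomial x α + lam αs 0)) := by
        simp only [Finset.sum_neg_distrib, mul_add, Finset.sum_add_distrib, Finset.mul_sum,
          Finset.sum_mul, mul_assoc]
        rw [Finset.sum_comm]
    _ ≤ ∑ αs ∈ Dfin f, -(gemWeight f αs * absMonomial x αs) :=
        Finset.sum_le_sum fun αs hαs => neg_le_neg <| mul_le_mul_of_nonneg_left
          (absMonomial_le_of_isMinBary hlam (Dfin_subset_V0c f hαs) x) (gemWeight_nonneg f αs)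
    _ ≤ _ := Finset.sum_le_sum fun αs _ => neg_gemWeight_mul_le f αs x

lemma mul_vertexSum_sub_le_eval {f : MvPolynomial (Fin n) ℝ} (hC1 : CondC1 f)
    {lam : (Fin n →₀ ℕ) → (Fin n →₀ ℕ) → ℝ} (hlam : IsMinBary f lam) {c : ℝ}
    (hc : ∀ α ∈ Vinf f, c ≤ f.coeff α - ∑ αs ∈ Dfin f, gemWeight f αs * lam αs α)
    (x : Fin n → ℝ) :
    c * vertexSum f x - ∑ α ∈ (f.support \ Vinf f) \ Dfin f, |f.coeff α| * absMonomial x α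
      - ∑ αs ∈ Dfin f, gemWeight f αs * lam αs 0 ≤ MvPolynomial.eval x f := by
  have hD : Dfin f ⊆ f.support \ Vinf f := fun α hα =>
    Finset.mem_sdiff.2 ⟨Finset.filter_subset _ _ hα, (Finset.mem_filter.1 hα).2.2.1⟩
  have hV : c * vertexSum f x ≤
      ∑ α ∈ Vinf f, (f.coeff α - ∑ αs ∈ Dfin f, gemWeight f αs * lam αs α) * absMonomial x α := by
    rw [vertexSum, Finset.mul_sum]
    exact Finset.sum_le_sum fun α hα =>
      mul_le_mul_of_nonneg_right (hc α hα) (absMonomial_nonneg x α)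
  have hVeq : ∑ α ∈ Vinf f, f.coeff α * ∏ i, x i ^ α i =
      ∑ α ∈ Vinf f, f.coeff α * absMonomial x α :=
    Finset.sum_congr rfl fun α hα => by rw [prod_pow_eq_absMonomial_of_isEvenExp x (hC1 α hα)]
  have hR : -∑ α ∈ (f.support \ Vinf f) \ Dfin f, |f.coeff α| * absMonomial x α ≤
      ∑ α ∈ (f.support \ Vinf f) \ Dfin f, f.coeff α * ∏ i, x i ^ α i := by
    rw [← Finset.sum_neg_distrib]
    refine Finset.sum_le_sum fun α _ => ?_
    rw [← abs_prod_pow_eq_absMonomial, ← abs_mul]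
    exact neg_abs_le _
  rw [MvPolynomial.eval_eq', ← Finset.sum_sdiff (Vinf_subset_support f), ← Finset.sum_sdiff hD]
  simp only [sub_mul, Finset.sum_sub_distrib] at hV
  linarith [neg_le_sum_Dfin_terms hlam x]

lemma exists_sum_abs_coeff_mul_absMonomial_le (f : MvPolynomial (Fin n) ℝ) {ε : ℝ}
    (hε : 0 < ε) : ∃ C, ∀ x, ∑ β ∈ (f.support \ Vinf f) \ Dfin f, |f.coeff β| * absMonomial x β
      ≤ ε * vertexSum f x + C := by
  refine exists_sum_mul_le_mul_add (vertexSum_nonneg f) (fun β _ => abs_nonneg (f.coeff β))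
    (g := fun β x => absMonomial x β) (fun β hβ ε hε => ?_) hε
  obtain ⟨hβ, hβD⟩ := Finset.mem_sdiff.1 hβ
  obtain ⟨hβsupp, hβV⟩ := Finset.mem_sdiff.1 hβ
  exact exists_absMonomial_le_mul_vertexSum_add hβsupp hβV
    (fun h => hβD (Finset.mem_filter.2 ⟨hβsupp, h⟩)) hε

theorem stmt0_general {n : ℕ} (f : MvPolynomial (Fin n) ℝ)
    (hC1 : CondC1 f) (hC3 : CondC3 f)
    (lam : (Fin n →₀ ℕ) → (Fin n →₀ ℕ) → ℝ) (hlam : IsMinBary f lam)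
    (hineq : ∀ α ∈ Vinf f,
      f.coeff α >
        (∑ αs ∈ (Dfin f).filter fun αs => ¬ IsEvenExp αs, |f.coeff αs| * lam αs α)
          - ∑ αs ∈ (Dfin f).filter fun αs => IsEvenExp αs, min 0 (f.coeff αs) * lam αs α) :
    Coercive fun x => MvPolynomial.eval x f := by
  obtain ⟨c, hc, hcV⟩ := exists_pos_le_of_forall_pos (Vinf f)
    (g := fun α => f.coeff α - ∑ αs ∈ Dfin f, gemWeight f αs * lam αs α)
    fun α hα => by simpa [sum_gemWeight_mul_eq] using hineq α hα
  obtain ⟨C, hC⟩ := exists_sum_abs_coeff_mul_absMonomial_le f (half_pos hc)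
  refine tendsto_atTop_mono (fun x => ?_) <|
    tendsto_atTop_add_const_right _ (-(C + ∑ αs ∈ Dfin f, gemWeight f αs * lam αs 0))
      ((tendsto_vertexSum hC3).const_mul_atTop (half_pos hc))
  linarith [mul_vertexSum_sub_le_eval hC1 hlam hcV x, hC x]

/-- Theorem: sufficient condition for coercivity.
If `f` satisfies (C1)-(C3), `λ_f` is a map of minimal barycentric coordinates of `f`, and for
every vertex at infinity `α ∈ V(f)` the coefficient `f_α` exceeds
`Σ_{α*∈D(f), α* odd} |f_{α*}| λ_f(α*,α) − Σ_{α*∈D(f), α* even} min{0,f_{α*}} λ_f(α*,α)`,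
then `f` is coercive on `ℝⁿ`. -/
theorem stmt0 {n : ℕ} (f : MvPolynomial (Fin n) ℝ)
    (hC1 : CondC1 f) (hC2 : CondC2 f) (hC3 : CondC3 f)
    (lam : (Fin n →₀ ℕ) → (Fin n →₀ ℕ) → ℝ) (hlam : IsMinBary f lam)
    (hineq : ∀ α ∈ Vinf f,
      f.coeff α >
        (∑ αs ∈ (Dfin f).filter fun αs => ¬ IsEvenExp αs, |f.coeff αs| * lam αs α)
          - ∑ αs ∈ (Dfin f).filter fun αs => IsEvenExp αs, min 0 (f.coeff αs) * lam αs α) :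
    Coercive fun x => MvPolynomial.eval x f :=
  stmt0_general f hC1 hC3 lam hlam hineq
end
end

section
/- Let f ∈ ℝ[x₁,…,xₙ] be a circuit polynomial, f(x) = Σ_{j=0}^r f_{α(j)} x^{α(j)} + f_{α*} x^{α*}, with barycentric coordinates λ_j of α* relative to the vertices α(j). Then f(x) ≥ 0 for all x ∈ ℝⁿ if and only if: f_{α*} ≥ −Π_{j=0}^r (f_{α(j)}/λ_j)^{λ_j} in case α* ∈ (2ℕ₀)ⁿ, and |f_{α*}| ≤ Π_{j=0}^r (f_{α(j)}/λ_j)^{λ_j} in case α* ∉ (2ℕ₀)ⁿ. -/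
open MvPolynomial Filter

noncomputable section

open scoped Classical

/-- The polynomial `Σ_{j=0}^r c_j x^{α(j)} + c* x^{α*}`. -/
noncomputable def circuitPoly {n r : ℕ} (α : Fin (r + 1) → (Fin n →₀ ℕ)) (c : Fin (r + 1) → ℝ)
    (αs : Fin n →₀ ℕ) (cs : ℝ) : MvPolynomial (Fin n) ℝ :=
  (∑ j, MvPolynomial.monomial (α j) (c j)) + MvPolynomial.monomial αs cs

/-- The data `(α, c, α*, c*, λ)` describes a circuit polynomial
`f = Σ_{j=0}^r c_j x^{α(j)} + c* x^{α*}` with `r ≤ n`. -/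
def IsCircuit {n r : ℕ} (α : Fin (r + 1) → (Fin n →₀ ℕ)) (c : Fin (r + 1) → ℝ)
    (αs : Fin n →₀ ℕ) (cs : ℝ) (lam : Fin (r + 1) → ℝ) : Prop :=
  r ≤ n ∧
  αs ∉ Set.range α ∧
  (∀ j, IsEvenExp (α j)) ∧
  (∀ j, 0 < c j) ∧
  Set.extremePoints ℝ
      (convexHull ℝ (expEmbed '' ((circuitPoly α c αs cs).support : Set (Fin n →₀ ℕ))))
    = expEmbed '' Set.range α ∧
  AffineIndependent ℝ (fun j => expEmbed (α j)) ∧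
  (∀ j, 0 < lam j) ∧ (∑ j, lam j) = 1 ∧ (∑ j, lam j • expEmbed (α j)) = expEmbed αs

/-- The circuit number `Θ = Π_{j=0}^r (c_j / λ_j)^{λ_j}` of a circuit polynomial. -/
noncomputable def circuitTheta {r : ℕ} (c : Fin (r + 1) → ℝ) (lam : Fin (r + 1) → ℝ) : ℝ :=
  ∏ j, (c j / lam j) ^ (lam j)

/-! By weighted AM-GM, `Θ · |x ^ α*| ≤ ∑ c_j x ^ α(j)` when all `α(j)` are even, which gives
sufficiency. Conversely, affine independence of the `α(j)` yields a point `x > 0` at which all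
the AM-GM terms `(c_j / λ_j) x ^ α(j)` agree, so equality holds there. Evaluating `f` at `x`, and
at `x` with the sign of one coordinate flipped where `α*` is odd, forces `-Θ ≤ c*` and `c* ≤ Θ`. -/

theorem LinearIndependent.exists_dual_eq {K V ι : Type*} [Field K] [AddCommGroup V] [Module K V]
    {v : ι → V} (hv : LinearIndependent K v) (b : ι → K) :
    ∃ f : Module.Dual K V, ∀ i, f (v i) = b i := by
  obtain ⟨g, hg⟩ := LinearMap.exists_extend ((Module.Basis.span hv).constr K b)
  refine ⟨g, fun i => ?_⟩
  have hgi := LinearMap.congr_fun hg (Module.Basis.span hv i)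
  rwa [LinearMap.comp_apply, Module.Basis.constr_basis, Submodule.subtype_apply,
    Module.Basis.coe_span_apply] at hgi

theorem AffineIndependent.exists_dual_add_const_eq {K V ι : Type*} [Field K] [AddCommGroup V]
    [Module K V] {p : ι → V} (hp : AffineIndependent K p) (b : ι → K) :
    ∃ (f : Module.Dual K V) (s : K), ∀ i, f (p i) + s = b i := by
  rcases isEmpty_or_nonempty ι with hι | ⟨⟨i₀⟩⟩
  · exact ⟨0, 0, isEmptyElim⟩
  obtain ⟨f, hf⟩ := ((affineIndependent_iff_linearIndependent_vsub K p i₀).mp hp).exists_dual_eq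
    fun i => b i - b i₀
  refine ⟨f, b i₀ - f (p i₀), fun i => ?_⟩
  by_cases hi : i = i₀
  · rw [hi]; ring
  · have hfi := hf ⟨i, hi⟩
    simp only [vsub_eq_sub, map_sub] at hfi
    linear_combination hfi

lemma eval_circuitPoly {n r : ℕ} (α : Fin (r + 1) → (Fin n →₀ ℕ)) (c : Fin (r + 1) → ℝ)
    (αs : Fin n →₀ ℕ) (cs : ℝ) (x : Fin n → ℝ) :
    MvPolynomial.eval x (circuitPoly α c αs cs)
      = (∑ j, c j * ∏ i, x i ^ α j i) + cs * ∏ i, x i ^ αs i := by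
  simp only [circuitPoly, map_add, map_sum, MvPolynomial.eval_monomial,
    Finsupp.prod_fintype _ _ fun i => pow_zero (x i)]

lemma Fintype.prod_update_neg_pow {ι R : Type*} [Fintype ι] [DecidableEq ι] [CommRing R]
    (x : ι → R) (d : ι → ℕ) (i : ι) :
    ∏ k, Function.update x i (-x i) k ^ d k = (-1) ^ d i * ∏ k, x k ^ d k := by
  rw [Fintype.prod_eq_mul_prod_compl i, Fintype.prod_eq_mul_prod_compl i (fun k => x k ^ d k),
    Function.update_self, neg_pow, mul_assoc]
  congr 2
  exact Finset.prod_congr rfl fun k hk => by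
    rw [Function.update_of_ne (Finset.mem_compl.mp hk <| Finset.mem_singleton.mpr ·)]

section WeightedMonomials

variable {σ ι : Type*} [Fintype σ] [Fintype ι]
  {α : ι → σ →₀ ℕ} {αs : σ →₀ ℕ} {c lam : ι → ℝ}

lemma prod_pow_eq_prod_rpow (hlam : ∀ j, 0 ≤ lam j)
    (hbary : ∀ i, (αs i : ℝ) = ∑ j, lam j * α j i) {y : σ → ℝ} (hy : ∀ i, 0 ≤ y i) :
    ∏ i, y i ^ αs i = ∏ j, (∏ i, y i ^ α j i) ^ lam j := by
  calc ∏ i, y i ^ αs i = ∏ i, ∏ j, (y i ^ α j i) ^ lam j := by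
        refine Finset.prod_congr rfl fun i _ => ?_
        rw [← Real.rpow_natCast, hbary i,
          Real.rpow_sum_of_nonneg (hy i) fun j _ => mul_nonneg (hlam j) (Nat.cast_nonneg _)]
        refine Finset.prod_congr rfl fun j _ => ?_
        rw [mul_comm, Real.rpow_mul (hy i), Real.rpow_natCast]
    _ = ∏ j, ∏ i, (y i ^ α j i) ^ lam j := Finset.prod_comm
    _ = ∏ j, (∏ i, y i ^ α j i) ^ lam j := Finset.prod_congr rfl fun j _ =>
        Real.finsetProd_rpow _ _ (fun i _ => pow_nonneg (hy i) _) _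

lemma prod_div_rpow_mul_prod_pow (hc : ∀ j, 0 ≤ c j) (hlam : ∀ j, 0 ≤ lam j)
    (hbary : ∀ i, (αs i : ℝ) = ∑ j, lam j * α j i) {y : σ → ℝ} (hy : ∀ i, 0 ≤ y i) :
    (∏ j, (c j / lam j) ^ lam j) * ∏ i, y i ^ αs i
      = ∏ j, (c j / lam j * ∏ i, y i ^ α j i) ^ lam j := by
  rw [prod_pow_eq_prod_rpow hlam hbary hy, ← Finset.prod_mul_distrib]
  exact Finset.prod_congr rfl fun j _ => (Real.mul_rpow (div_nonneg (hc j) (hlam j))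
    (Finset.prod_nonneg fun i _ => pow_nonneg (hy i) _)).symm

lemma prod_div_rpow_mul_prod_pow_le (hc : ∀ j, 0 ≤ c j) (hlam : ∀ j, 0 < lam j)
    (hlam1 : ∑ j, lam j = 1) (hbary : ∀ i, (αs i : ℝ) = ∑ j, lam j * α j i)
    {y : σ → ℝ} (hy : ∀ i, 0 ≤ y i) :
    (∏ j, (c j / lam j) ^ lam j) * ∏ i, y i ^ αs i ≤ ∑ j, c j * ∏ i, y i ^ α j i := by
  rw [prod_div_rpow_mul_prod_pow hc (fun j => (hlam j).le) hbary hy]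
  calc ∏ j, (c j / lam j * ∏ i, y i ^ α j i) ^ lam j
      ≤ ∑ j, lam j * (c j / lam j * ∏ i, y i ^ α j i) :=
        Real.geom_mean_le_arith_mean_weighted _ _ _ (fun j _ => (hlam j).le) hlam1
          fun j _ => mul_nonneg (div_nonneg (hc j) (hlam j).le)
            (Finset.prod_nonneg fun i _ => pow_nonneg (hy i) _)
    _ = ∑ j, c j * ∏ i, y i ^ α j i := Finset.sum_congr rfl fun j _ => by
        rw [← mul_assoc, mul_div_cancel₀ _ (hlam j).ne']

lemma prod_div_rpow_mul_abs_prod_pow_le (hc : ∀ j, 0 ≤ c j) (hlam : ∀ j, 0 < lam j)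
    (hlam1 : ∑ j, lam j = 1) (hbary : ∀ i, (αs i : ℝ) = ∑ j, lam j * α j i)
    (heven : ∀ j i, Even (α j i)) (x : σ → ℝ) :
    (∏ j, (c j / lam j) ^ lam j) * |∏ i, x i ^ αs i| ≤ ∑ j, c j * ∏ i, x i ^ α j i := by
  simp only [Finset.abs_prod, abs_pow]
  convert prod_div_rpow_mul_prod_pow_le hc hlam hlam1 hbary fun i => abs_nonneg (x i) using 4
  exact ((heven _ _).pow_abs _).symm

/-- The equality case of weighted AM-GM is attained at `x = exp t`, where
`⟪α j, t⟫ + s = log (lam j / c j)` is solvable by affine independence of the `α j`. -/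
lemma exists_pos_sum_mul_prod_pow_eq
    (haff : AffineIndependent ℝ fun j i => (α j i : ℝ)) (hc : ∀ j, 0 < c j)
    (hlam : ∀ j, 0 < lam j) (hlam1 : ∑ j, lam j = 1)
    (hbary : ∀ i, (αs i : ℝ) = ∑ j, lam j * α j i) :
    ∃ x : σ → ℝ, (∀ i, 0 < x i) ∧
      ∑ j, c j * ∏ i, x i ^ α j i = (∏ j, (c j / lam j) ^ lam j) * ∏ i, x i ^ αs i := by
  obtain ⟨f, s, hf⟩ := haff.exists_dual_add_const_eq fun j => Real.log (lam j / c j)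
  set x : σ → ℝ := fun i => Real.exp (f fun k => if i = k then 1 else 0)
  have hx : ∀ i, 0 < x i := fun i => Real.exp_pos _
  have hterm : ∀ j, c j / lam j * ∏ i, x i ^ α j i = Real.exp (-s) := fun j => by
    have hprod : ∏ i, x i ^ α j i = Real.exp (f fun i => (α j i : ℝ)) := by
      rw [f.pi_apply_eq_sum_univ, Real.exp_sum]
      exact Finset.prod_congr rfl fun i _ => by rw [smul_eq_mul, Real.exp_nat_mul]
    rw [hprod, eq_sub_of_add_eq (hf j), Real.exp_sub,
      Real.exp_log (div_pos (hlam j) (hc j)), Real.exp_neg]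
    field_simp [(hc j).ne', (hlam j).ne']
  refine ⟨x, hx, ?_⟩
  rw [prod_div_rpow_mul_prod_pow (fun j => (hc j).le) (fun j => (hlam j).le) hbary
    fun i => (hx i).le]
  calc ∑ j, c j * ∏ i, x i ^ α j i = ∑ j, lam j * (c j / lam j * ∏ i, x i ^ α j i) :=
        Finset.sum_congr rfl fun j _ => by rw [← mul_assoc, mul_div_cancel₀ _ (hlam j).ne']
    _ = Real.exp (-s) := Real.arith_mean_weighted_of_constant _ _ _ _ hlam1 fun j _ _ => hterm j
    _ = _ := (Real.geom_mean_weighted_of_constant _ _ _ _ (fun j _ => (hlam j).le) hlam1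
        (fun j _ => (hterm j).symm ▸ (Real.exp_pos _).le) fun j _ _ => hterm j).symm

end WeightedMonomials

/-- Theorem: nonnegativity of circuit polynomials via circuit numbers. -/
theorem stmt9 {n r : ℕ} (α : Fin (r + 1) → (Fin n →₀ ℕ)) (c : Fin (r + 1) → ℝ)
    (αs : Fin n →₀ ℕ) (cs : ℝ) (lam : Fin (r + 1) → ℝ)
    (hcirc : IsCircuit α c αs cs lam) :
    (∀ x : Fin n → ℝ, 0 ≤ MvPolynomial.eval x (circuitPoly α c αs cs)) ↔
      ((IsEvenExp αs → -circuitTheta c lam ≤ cs) ∧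
        (¬ IsEvenExp αs → |cs| ≤ circuitTheta c lam)) := by
  obtain ⟨-, -, heven, hc, -, haff, hlam, hlam1, hbary⟩ := hcirc
  replace hbary : ∀ i, (αs i : ℝ) = ∑ j, lam j * α j i := fun i => by
    simpa [expEmbed] using (congrFun hbary i).symm
  simp only [eval_circuitPoly]
  constructor
  · intro hf
    obtain ⟨x, hx, hxeq⟩ := exists_pos_sum_mul_prod_pow_eq haff hc hlam hlam1 hbary
    change _ = circuitTheta c lam * _ at hxeq
    have hM : 0 < ∏ i, x i ^ αs i := Finset.prod_pos fun i _ => pow_pos (hx i) _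
    have hlow : -circuitTheta c lam ≤ cs := by
      have hfx := hf x
      rw [hxeq] at hfx
      nlinarith
    refine ⟨fun _ => hlow, fun hodd => abs_le.mpr ⟨hlow, ?_⟩⟩
    obtain ⟨i₀, hi₀⟩ := not_forall.mp hodd
    have hfx := hf (Function.update x i₀ (-x i₀))
    simp only [Fintype.prod_update_neg_pow, (heven _ i₀).neg_one_pow,
      (Nat.not_even_iff_odd.mp hi₀).neg_one_pow, one_mul, hxeq] at hfx
    nlinarith
  · rintro ⟨hevenCase, hoddCase⟩ x
    have hbound : circuitTheta c lam * |∏ i, x i ^ αs i| ≤ ∑ j, c j * ∏ i, x i ^ α j i :=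
      prod_div_rpow_mul_abs_prod_pow_le (fun j => (hc j).le) hlam hlam1 hbary heven x
    suffices -(circuitTheta c lam * |∏ i, x i ^ αs i|) ≤ cs * ∏ i, x i ^ αs i by linarith
    by_cases he : IsEvenExp αs
    · have hM : 0 ≤ ∏ i, x i ^ αs i := Finset.prod_nonneg fun i _ => (he i).pow_nonneg _
      rw [abs_of_nonneg hM]
      nlinarith [hevenCase he]
    · calc -(circuitTheta c lam * |∏ i, x i ^ αs i|)
          ≤ -(|cs| * |∏ i, x i ^ αs i|) :=
            neg_le_neg (mul_le_mul_of_nonneg_right (hoddCase he) (abs_nonneg _))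
        _ = -|cs * ∏ i, x i ^ αs i| := by rw [abs_mul]
        _ ≤ cs * ∏ i, x i ^ αs i := neg_abs_le _

end
end
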